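/- Let C be a nonempty q-ary code of length n with minimum Hamming distance d ≤ n. Then c(C) ≤ min{e ∈ [q] : f*_{n,q}(e) ≥ d}, where c(C) = min{e : E(e;C) ≥ d} and f*_{n,q}(e) = r·e for e ≤ q−t, f*_{n,q}(e) = r(q−t)+(e−q+t)(r−1) otherwise, with r = ⌈n/q⌉ and t = q·r − n. Moreover, equality holds when C is an equitable symbol weight code. -/
import Mathlib

/-- Number of occurrences of the symbol `σ` in the word `u`. -/
def symbolCount {n : ℕ} {A : Type*} [Fintype A] [DecidableEq A]
    (u : Fin n → A) (σ : A) : ℕ :=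
  (Finset.univ.filter fun i => u i = σ).card

/-- `E(e; C)`. -/
def EC {n : ℕ} {A : Type*} [Fintype A] [DecidableEq A]
    (C : Finset (Fin n → A)) (e : ℕ) : ℕ :=
  C.sup fun c => (Finset.univ.powersetCard e).sup fun Γ => ∑ σ ∈ Γ, symbolCount c σ

/-- The narrowband noise error-correcting capability `c(C)`. -/
noncomputable def nbCap {n : ℕ} {A : Type*} [Fintype A] [DecidableEq A]
    (C : Finset (Fin n → A)) (d : ℕ) : ℕ :=
  sInf {e : ℕ | d ≤ EC C e}

/-- The extremal function `f*_{n,q}` with `r = ⌈n/q⌉` and `t = q·r − n`. -/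
def fstar (n q e : ℕ) : ℕ :=
  let r := (n + q - 1) / q
  let t := q * r - n
  if e ≤ q - t then r * e else r * (q - t) + (e - (q - t)) * (r - 1)

open Finset

section Helpers

/-- Basic arithmetic facts about `r = ⌈n/q⌉`. -/
lemma stmt8.ceil_facts (n q : ℕ) (hq : 1 ≤ q) (hn : 1 ≤ n) :
    n ≤ q * ((n + q - 1) / q) ∧ q * ((n + q - 1) / q) < n + q := by
  have h1 : q * ((n + q - 1) / q) ≤ n + q - 1 := Nat.mul_div_le _ _
  have h2 : n + q - 1 < q * ((n + q - 1) / q + 1) := Nat.lt_mul_div_succ _ hq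
  have h3 : q * ((n + q - 1) / q + 1) = q * ((n + q - 1) / q) + q := by ring
  omega

/-- `fstar n q q = n`. -/
lemma stmt8.fstar_q (n q : ℕ) (hq : 1 ≤ q) (hn : 1 ≤ n) : fstar n q q = n := by
  obtain ⟨hA, hB⟩ := stmt8.ceil_facts n q hq hn
  unfold fstar
  dsimp only
  set r := (n + q - 1) / q with hr
  set t := q * r - n with ht
  have hrq : q * r = n + t := by omega
  have htq : t < q := by omega
  have hr1 : 1 ≤ r := by
    rcases Nat.eq_zero_or_pos r with h | h
    · rw [h, Nat.mul_zero] at hA; omega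
    · exact h
  split_ifs with hcase
  · have ht0 : t = 0 := by omega
    rw [Nat.mul_comm]
    omega
  · push_neg at hcase
    have h0 : 0 < t := by omega
    zify [htq.le, hr1, Nat.sub_le q t] at hrq ⊢
    nlinarith

/-- `fstar` lower bound given top-`e` sum structure. -/
lemma stmt8.fstar_le (n q e T m : ℕ) (hq : 1 ≤ q) (hn : 1 ≤ n) (he : e ≤ q)
    (h1 : e * m ≤ T) (h2 : n ≤ T + (q - e) * m) : fstar n q e ≤ T := by
  obtain ⟨hA, hB⟩ := stmt8.ceil_facts n q hq hn
  unfold fstar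
  dsimp only
  set r := (n + q - 1) / q with hr
  set t := q * r - n with ht
  have hrq : q * r = n + t := by omega
  have htq : t < q := by omega
  have hr1 : 1 ≤ r := by
    rcases Nat.eq_zero_or_pos r with h | h
    · rw [h, Nat.mul_zero] at hA; omega
    · exact h
  rcases le_or_gt r m with hm | hm
  · have her : e * r ≤ T := le_trans (Nat.mul_le_mul_left e hm) h1
    split_ifs with hcase
    · zify at her ⊢; nlinarith
    · push_neg at hcase
      have hcase' : (q : ℤ) - t ≤ e := by zify [htq.le] at hcase; omega
      zify [he, htq.le, hr1, hcase.le] at her hrq ⊢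
      nlinarith
  · have hm' : m ≤ r - 1 := by omega
    have hkey : n ≤ T + (q - e) * (r - 1) :=
      le_trans h2 (Nat.add_le_add_left (Nat.mul_le_mul_left _ hm') _)
    split_ifs with hcase
    · have hcase' : (e : ℤ) ≤ (q : ℤ) - t := by zify [htq.le] at hcase; omega
      zify [he, htq.le, hr1, hcase] at hkey hrq ⊢; nlinarith
    · push_neg at hcase
      have hcase' : (q : ℤ) - t ≤ e := by zify [htq.le] at hcase; omega
      zify [he, htq.le, hr1, hcase.le] at hkey hrq ⊢; nlinarith

/-- A set of `e` symbols with the largest weights exists. -/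
lemma stmt8.exists_top {A : Type*} [Fintype A] [DecidableEq A]
    (w : A → ℕ) (e : ℕ) (he : e ≤ Fintype.card A) :
    ∃ Γ : Finset A, Γ.card = e ∧ ∀ σ ∈ Γ, ∀ τ ∉ Γ, w τ ≤ w σ := by
  induction e with
  | zero => exact ⟨∅, rfl, by simp⟩
  | succ e ih =>
    obtain ⟨Γ, hcard, hprop⟩ := ih (le_of_lt (Nat.lt_of_succ_le he))
    have hne : Γᶜ.Nonempty := by
      rw [← Finset.card_pos, Finset.card_compl, hcard]
      omega
    obtain ⟨τ, hτmem, hτmax⟩ := Γᶜ.exists_max_image w hne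
    have hτ : τ ∉ Γ := Finset.mem_compl.mp hτmem
    refine ⟨insert τ Γ, by rw [Finset.card_insert_of_notMem hτ, hcard], ?_⟩
    intro σ hσ ρ hρ
    have hρΓ : ρ ∉ Γ := fun h => hρ (Finset.mem_insert_of_mem h)
    rcases Finset.mem_insert.mp hσ with rfl | hσΓ
    · exact hτmax ρ (Finset.mem_compl.mpr hρΓ)
    · exact hprop σ hσΓ ρ hρΓ

/-- Lower bound: some `e`-set of symbols has total weight at least `fstar n q e`. -/
lemma stmt8.fstar_le_sum {A : Type*} [Fintype A] [DecidableEq A] {n q : ℕ}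
    (w : A → ℕ) (hq : Fintype.card A = q) (hn : 1 ≤ n)
    (hsum : ∑ σ, w σ = n) (e : ℕ) (he1 : 1 ≤ e) (he : e ≤ q) :
    ∃ Γ : Finset A, Γ.card = e ∧ fstar n q e ≤ ∑ σ ∈ Γ, w σ := by
  have hq1 : 1 ≤ q := le_trans he1 he
  obtain ⟨Γ, hcard, hprop⟩ := stmt8.exists_top w e (hq ▸ he)
  have hΓne : Γ.Nonempty := Finset.card_pos.mp (hcard ▸ he1)
  set m := Γ.inf' hΓne w with hm
  refine ⟨Γ, hcard, stmt8.fstar_le n q e _ m hq1 hn he ?_ ?_⟩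
  · have := Finset.card_nsmul_le_sum Γ w m (fun x hx => Finset.inf'_le w hx)
    rwa [hcard, smul_eq_mul] at this
  · obtain ⟨σ₀, hσ₀, hσ₀e⟩ := Finset.exists_mem_eq_inf' hΓne w
    have hcomp : ∑ σ ∈ Γᶜ, w σ ≤ (q - e) * m := by
      have h := Finset.sum_le_card_nsmul Γᶜ w m (fun τ hτ => by
        have h2 := hprop σ₀ hσ₀ τ (Finset.mem_compl.mp hτ); omega)
      rwa [Finset.card_compl, hcard, hq, smul_eq_mul] at h
    have := Finset.sum_add_sum_compl Γ w
    omega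

lemma stmt8.sum_le_fstar_aux {A : Type*} [Fintype A] [DecidableEq A] {n q k : ℕ}
    (w : A → ℕ) (hq : Fintype.card A = q)
    (hq1 : 1 ≤ q) (hsum : ∑ σ, w σ = n)
    (hw : ∀ σ, w σ = k ∨ w σ = k + 1)
    (hk1 : q * k ≤ n) (hk2 : n < q * k + q)
    (hn : 1 ≤ n) (Γ : Finset A) (hstrict : q * k < n) :
    ∑ σ ∈ Γ, w σ ≤
      if Γ.card ≤ q - (q * (k + 1) - n) then (k + 1) * Γ.card
      else (k + 1) * (q - (q * (k + 1) - n)) +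
        (Γ.card - (q - (q * (k + 1) - n))) * (k + 1 - 1) := by
  set e := Γ.card with hecard
  have he : e ≤ q := by
    rw [hecard, ← hq, ← Finset.card_univ]; exact Finset.card_le_card (subset_univ Γ)
  set a := (univ.filter (fun σ => w σ = k + 1)).card with ha
  set s := (Γ.filter (fun σ => w σ = k + 1)).card with hs
  have hse : s ≤ e := by rw [hs, hecard]; exact Finset.card_filter_le _ _
  have hsa : s ≤ a :=
    Finset.card_le_card (Finset.filter_subset_filter _ (subset_univ Γ))
  have haq : a ≤ q := by
    rw [ha, ← hq, ← Finset.card_univ]; exact Finset.card_filter_le _ _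
  have hsplit : ∀ (S : Finset A), ∑ σ ∈ S, w σ =
      (S.filter (fun σ => w σ = k + 1)).card * (k + 1) +
      (S.filter (fun σ => ¬ w σ = k + 1)).card * k := by
    intro S
    rw [← Finset.sum_filter_add_sum_filter_not S (fun σ => w σ = k + 1)]
    congr 1
    · rw [Finset.sum_congr rfl (fun σ hσ => (Finset.mem_filter.mp hσ).2),
        Finset.sum_const, smul_eq_mul]
    · rw [Finset.sum_congr rfl (fun σ hσ => ?_), Finset.sum_const, smul_eq_mul]
      rcases hw σ with h | h
      · exact h
      · exact absurd h (Finset.mem_filter.mp hσ).2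
  have huniv := hsplit univ
  have huc : a + (univ.filter (fun σ => ¬ w σ = k + 1)).card = q := by
    rw [ha, Finset.card_filter_add_card_filter_not, Finset.card_univ, hq]
  rw [hsum, ← ha] at huniv
  have hl : (univ.filter (fun σ => ¬ w σ = k + 1)).card = q - a := by omega
  rw [hl] at huniv
  have hna : n = q * k + a := by
    have h5 : a * (k + 1) + (q - a) * k = q * k + a := by zify [haq]; ring
    omega
  have hΓc : s + (Γ.filter (fun σ => ¬ w σ = k + 1)).card = e := by
    rw [hs, Finset.card_filter_add_card_filter_not, hecard]
  have hΓsum := hsplit Γ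
  rw [← hs] at hΓsum
  have hl2 : (Γ.filter (fun σ => ¬ w σ = k + 1)).card = e - s := by omega
  rw [hl2] at hΓsum
  have hΓval : ∑ σ ∈ Γ, w σ = e * k + s := by
    have h6 : s * (k + 1) + (e - s) * k = e * k + s := by zify [hse]; ring
    omega
  have htval : q * (k + 1) - n = q - a := by
    have : q * (k + 1) = q * k + q := by ring
    omega
  rw [htval, hΓval]
  have hqa : q - (q - a) = a := by omega
  rw [hqa]
  split_ifs with hcase
  · have : (k + 1) * e = e * k + e := by ring
    omega
  · have : (k + 1) * a + (e - a) * (k + 1 - 1) = e * k + a := by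
      push_neg at hcase
      rw [Nat.add_sub_cancel]
      zify [hcase.le]; ring
    omega

/-- Upper bound for equitable weight distributions. -/
lemma stmt8.sum_le_fstar {A : Type*} [Fintype A] [DecidableEq A] {n q : ℕ}
    (w : A → ℕ) (hq : Fintype.card A = q) (hq1 : 1 ≤ q)
    (hn : 1 ≤ n) (hsum : ∑ σ, w σ = n)
    (hw : ∀ σ, w σ = n / q ∨ w σ = (n + q - 1) / q) (Γ : Finset A) :
    ∑ σ ∈ Γ, w σ ≤ fstar n q Γ.card := by
  have hk1 : q * (n / q) ≤ n := Nat.mul_div_le _ _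
  have hk2 : n < q * (n / q) + q := by
    have h0 := Nat.lt_mul_div_succ n hq1
    have h : q * (n / q + 1) = q * (n / q) + q := by ring
    omega
  have hr1 : q * ((n + q - 1) / q) ≤ n + q - 1 := Nat.mul_div_le _ _
  have hr2 : n + q - 1 < q * ((n + q - 1) / q) + q := by
    have h0 := Nat.lt_mul_div_succ (n + q - 1) hq1
    have h : q * ((n + q - 1) / q + 1) = q * ((n + q - 1) / q) + q := by ring
    omega
  unfold fstar
  dsimp only
  generalize hK : n / q = k at hw hk1 hk2
  generalize hR : (n + q - 1) / q = r at hw hr1 hr2 ⊢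
  clear hK hR
  have hkler : k ≤ r := Nat.le_of_mul_le_mul_left (by omega) hq1
  have hrlek : r ≤ k + 1 := by
    have h3 : q * (k + 2) = q * k + q + q := by ring
    have h4 : r < k + 2 := Nat.lt_of_mul_lt_mul_left (a := q) (by omega)
    omega
  rcases Nat.eq_or_lt_of_le hkler with heq | hlt
  · -- q ∣ n : every weight equals `k` and `q * k = n`
    subst heq
    have hqr : q * k = n := by omega
    have hall : ∀ σ, w σ = k := fun σ => by rcases hw σ with h | h <;> omega
    have ht0 : q * k - n = 0 := by omega
    rw [ht0]
    have hΓ : ∑ σ ∈ Γ, w σ = Γ.card * k := by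
      rw [Finset.sum_congr rfl (fun σ _ => hall σ), Finset.sum_const, smul_eq_mul]
    have he : Γ.card ≤ q := by
      rw [← hq, ← Finset.card_univ]; exact Finset.card_le_card (subset_univ Γ)
    rw [if_pos (by omega), hΓ, Nat.mul_comm]
  · -- `r = k + 1`
    have hrk : r = k + 1 := by
      rcases Nat.eq_or_lt_of_le hrlek with h | h
      · exact h
      · omega
    subst hrk
    have hstrict : q * k < n := by
      have h : q * (k + 1) = q * k + q := by ring
      omega
    exact stmt8.sum_le_fstar_aux w hq hq1 hsum hw hk1 hk2 hn Γ hstrict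

/-- Total symbol count is the word length. -/
lemma stmt8.sum_symbolCount {n : ℕ} {A : Type*} [Fintype A] [DecidableEq A]
    (u : Fin n → A) : ∑ σ, symbolCount u σ = n := by
  have h := Finset.card_eq_sum_card_fiberwise
    (f := u) (s := (univ : Finset (Fin n))) (t := (univ : Finset A))
    (fun i _ => mem_univ _)
  rw [Finset.card_univ, Fintype.card_fin] at h
  simp only [symbolCount]
  exact h.symm

end Helpers

/-- `c(C) ≤ min {e ∈ [q] : f*_{n,q}(e) ≥ d}`, with equality when `C`
is an equitable symbol weight code. -/
theorem stmt8 {n q : ℕ} {A : Type*} [Fintype A] [DecidableEq A]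
    (hq : Fintype.card A = q) (hq1 : 1 ≤ q)
    (C : Finset (Fin n → A)) (hC : C.Nonempty)
    (d : ℕ) (hd1 : 1 ≤ d) (hdn : d ≤ n)
    (hmin : ∀ u ∈ C, ∀ v ∈ C, u ≠ v → d ≤ hammingDist u v)
    (hach : ∃ u ∈ C, ∃ v ∈ C, u ≠ v ∧ hammingDist u v = d) :
    nbCap C d ≤ sInf {e : ℕ | 1 ≤ e ∧ e ≤ q ∧ d ≤ fstar n q e} ∧
    ((∀ c ∈ C, ∀ σ : A,
        symbolCount c σ = n / q ∨ symbolCount c σ = (n + q - 1) / q) →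
      nbCap C d = sInf {e : ℕ | 1 ≤ e ∧ e ≤ q ∧ d ≤ fstar n q e}) := by
  have hn : 1 ≤ n := le_trans hd1 hdn
  have hqS : q ∈ {e : ℕ | 1 ≤ e ∧ e ≤ q ∧ d ≤ fstar n q e} :=
    ⟨hq1, le_refl q, by rw [stmt8.fstar_q n q hq1 hn]; exact hdn⟩
  set e0 := sInf {e : ℕ | 1 ≤ e ∧ e ≤ q ∧ d ≤ fstar n q e} with he0def
  have he0 : e0 ∈ {e : ℕ | 1 ≤ e ∧ e ≤ q ∧ d ≤ fstar n q e} :=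
    Nat.sInf_mem ⟨q, hqS⟩
  obtain ⟨he01, he0q, he0d⟩ := he0
  -- `e0 ∈ T`, i.e. `d ≤ EC C e0`
  obtain ⟨c, hc⟩ := hC
  obtain ⟨Γ, hΓcard, hΓge⟩ := stmt8.fstar_le_sum (symbolCount c) hq hn
    (stmt8.sum_symbolCount c) e0 he01 he0q
  have he0T : d ≤ EC C e0 := by
    unfold EC
    calc d ≤ fstar n q e0 := he0d
      _ ≤ ∑ σ ∈ Γ, symbolCount c σ := hΓge
      _ ≤ (Finset.univ.powersetCard e0).sup fun Γ => ∑ σ ∈ Γ, symbolCount c σ :=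
          Finset.le_sup (f := fun Γ => ∑ σ ∈ Γ, symbolCount c σ)
            (Finset.mem_powersetCard.mpr ⟨subset_univ Γ, hΓcard⟩)
      _ ≤ C.sup fun c => (Finset.univ.powersetCard e0).sup fun Γ =>
            ∑ σ ∈ Γ, symbolCount c σ :=
          Finset.le_sup (f := fun c => (Finset.univ.powersetCard e0).sup fun Γ =>
            ∑ σ ∈ Γ, symbolCount c σ) hc
  have hpart1 : nbCap C d ≤ e0 := Nat.sInf_le he0T
  refine ⟨hpart1, fun hequit => ?_⟩
  refine le_antisymm hpart1 ?_
  -- the reverse inequality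
  have hTmem : d ≤ EC C (nbCap C d) := Nat.sInf_mem (⟨e0, he0T⟩ :
    Set.Nonempty {e : ℕ | d ≤ EC C e})
  have hnb_le : nbCap C d ≤ e0 := hpart1
  have hECle : EC C (nbCap C d) ≤ fstar n q (nbCap C d) := by
    apply Finset.sup_le
    intro c' hc'
    apply Finset.sup_le
    intro Γ' hΓ'
    obtain ⟨hsub, hcard⟩ := Finset.mem_powersetCard.mp hΓ'
    have := stmt8.sum_le_fstar (symbolCount c') hq hq1 hn
      (stmt8.sum_symbolCount c') (hequit c' hc') Γ'
    rwa [hcard] at this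
  have hnb1 : 1 ≤ nbCap C d := by
    rcases Nat.eq_zero_or_pos (nbCap C d) with h0 | h0
    · exfalso
      rw [h0] at hTmem hECle
      have hf0 : fstar n q 0 = 0 := by
        unfold fstar
        dsimp only
        split_ifs with hcc
        · rw [Nat.mul_zero]
        · omega
      omega
    · exact h0
  exact Nat.sInf_le ⟨hnb1, le_trans hnb_le he0q, le_trans hTmem hECle⟩
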